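/- arXiv:2202.05671 — 2 statements merged into one kernel-verified Lean document; each statement's English description precedes it below -/
import Mathlib

section
/- Let k > 0, σ > 0, and let r, T be real numbers. Define w(x, t) = x·Φ(d1(x,t)) - k·exp(-r·(T - t))·Φ(d2(x,t)) for x > 0 and t < T, where d1(x,t) = (log(x/k) + (r + σ²/2)·(T - t))/(σ·√(T - t)), d2(x,t) = d1(x,t) - σ·√(T - t), and Φ is the standard normal cumulative distribution function. Then for all x > 0 and t < T, the partial derivatives of w satisfy the Black–Scholes partial differential equation ∂w/∂t = r·w - r·x·(∂w/∂x) - (1/2)·σ²·x²·(∂²w/∂x²). -/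
/-!
With `τ = T - t`, the whole computation rests on the identity `x φ(d₁) = k e^{-rτ} φ(d₂)`, which
follows from `d₁² - d₂² = 2 log (x / k) + 2 r τ`. It makes the terms in which `d₁` and `d₂` are
differentiated cancel, leaving `∂ₓw = Φ(d₁)`, `∂ₓ²w = φ(d₁) / (x σ √τ)` and
`∂ₜw = -σ x φ(d₁) / (2 √τ) - r k e^{-rτ} Φ(d₂)`; the equation is then an algebraic identity.
-/

open Real MeasureTheory

/-- Standard normal cumulative distribution function. -/
noncomputable def stdNormalCDF (y : ℝ) : ℝ :=
  ∫ u in Set.Iic y, (1 / Real.sqrt (2 * π)) * Real.exp (-u ^ 2 / 2)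

noncomputable def stdNormalPDF (y : ℝ) : ℝ :=
  (1 / √(2 * π)) * exp (-y ^ 2 / 2)

lemma integrable_stdNormalPDF : Integrable stdNormalPDF := by
  have h := (integrable_exp_neg_mul_sq (by norm_num : (0 : ℝ) < 1 / 2)).const_mul
    (1 / √(2 * π))
  refine h.congr (Filter.Eventually.of_forall fun y => ?_)
  simp only [stdNormalPDF]
  ring_nf

lemma continuous_stdNormalPDF : Continuous stdNormalPDF := by
  unfold stdNormalPDF
  fun_prop

lemma hasDerivAt_stdNormalCDF (y : ℝ) : HasDerivAt stdNormalCDF (stdNormalPDF y) y := by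
  have hint := integrable_stdNormalPDF
  have hsplit : ∀ z, stdNormalCDF z = stdNormalCDF 0 + ∫ u in (0 : ℝ)..z, stdNormalPDF u := by
    intro z
    have h := intervalIntegral.integral_Iic_sub_Iic (μ := volume) (a := 0) (b := z)
      hint.integrableOn hint.integrableOn
    simp only [stdNormalCDF, stdNormalPDF] at h ⊢
    linarith
  have hFTC := intervalIntegral.integral_hasDerivAt_right (a := 0) (b := y) hint.intervalIntegrable
    (continuous_stdNormalPDF.stronglyMeasurableAtFilter _ _) continuous_stdNormalPDF.continuousAt
  exact (hFTC.const_add _).congr_of_eventuallyEq (Filter.Eventually.of_forall hsplit)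

lemma HasDerivAt.stdNormalCDF {f : ℝ → ℝ} {f' x : ℝ} (hf : HasDerivAt f f' x) :
    HasDerivAt (fun y => stdNormalCDF (f y)) (stdNormalPDF (f x) * f') x :=
  (hasDerivAt_stdNormalCDF (f x)).comp x hf

lemma stdNormalPDF_sub (a b : ℝ) :
    stdNormalPDF (a - b) = stdNormalPDF a * exp (a * b - b ^ 2 / 2) := by
  simp only [stdNormalPDF, mul_assoc, ← exp_add]
  ring_nf

namespace BlackScholes

variable (k σ r T : ℝ)

noncomputable def d1 (x t : ℝ) : ℝ :=
  (log (x / k) + (r + σ ^ 2 / 2) * (T - t)) / (σ * √(T - t))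

noncomputable def d2 (x t : ℝ) : ℝ :=
  d1 k σ r T x t - σ * √(T - t)

noncomputable def call (x t : ℝ) : ℝ :=
  x * stdNormalCDF (d1 k σ r T x t) - k * exp (-r * (T - t)) * stdNormalCDF (d2 k σ r T x t)

variable {k σ r T}

lemma mul_stdNormalPDF_d1 {x t : ℝ} (hx : 0 < x) (hk : 0 < k) (hσ : σ ≠ 0) (ht : t < T) :
    x * stdNormalPDF (d1 k σ r T x t) =
      k * exp (-r * (T - t)) * stdNormalPDF (d2 k σ r T x t) := by
  have hτ : 0 < T - t := sub_pos.mpr ht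
  have hd1 : d1 k σ r T x t * (σ * √(T - t)) = log (x / k) + (r + σ ^ 2 / 2) * (T - t) := by
    rw [d1, div_mul_cancel₀ _ (by positivity)]
  have hsq : √(T - t) ^ 2 = T - t := sq_sqrt hτ.le
  have hexp : exp (d1 k σ r T x t * (σ * √(T - t)) - (σ * √(T - t)) ^ 2 / 2) =
      x / k * exp (r * (T - t)) := by
    rw [show d1 k σ r T x t * (σ * √(T - t)) - (σ * √(T - t)) ^ 2 / 2 =
        log (x / k) + r * (T - t) by linear_combination hd1 - σ ^ 2 / 2 * hsq,
      exp_add, exp_log (div_pos hx hk)]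
  rw [d2, stdNormalPDF_sub, hexp, neg_mul, exp_neg]
  field_simp

lemma hasDerivAt_d1_spot {x t : ℝ} (hx : x ≠ 0) (hk : k ≠ 0) :
    HasDerivAt (fun y => d1 k σ r T y t) (1 / (x * (σ * √(T - t)))) x := by
  have hlog := ((hasDerivAt_id' (x := x)).div_const k).log (div_ne_zero hx hk)
  refine ((hlog.add_const ((r + σ ^ 2 / 2) * (T - t))).div_const (σ * √(T - t))).congr_deriv ?_
  field_simp

lemma hasDerivAt_d2_spot {x t : ℝ} (hx : x ≠ 0) (hk : k ≠ 0) :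
    HasDerivAt (fun y => d2 k σ r T y t) (1 / (x * (σ * √(T - t)))) x :=
  (hasDerivAt_d1_spot hx hk).sub_const _

lemma hasDerivAt_call_spot {x t : ℝ} (hx : 0 < x) (hk : 0 < k) (hσ : σ ≠ 0) (ht : t < T) :
    HasDerivAt (fun y => call k σ r T y t) (stdNormalCDF (d1 k σ r T x t)) x := by
  have hΦ1 : HasDerivAt (fun y => stdNormalCDF (d1 k σ r T y t)) _ x :=
    (hasDerivAt_d1_spot hx.ne' hk.ne').stdNormalCDF
  have hΦ2 : HasDerivAt (fun y => stdNormalCDF (d2 k σ r T y t)) _ x :=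
    (hasDerivAt_d2_spot hx.ne' hk.ne').stdNormalCDF
  have h := ((hasDerivAt_id' (x := x)).mul hΦ1).sub (hΦ2.const_mul (k * exp (-r * (T - t))))
  refine h.congr_deriv ?_
  linear_combination (1 / (x * (σ * √(T - t)))) * mul_stdNormalPDF_d1 (r := r) hx hk hσ ht

lemma deriv_deriv_call_spot {x t : ℝ} (hx : 0 < x) (hk : 0 < k) (hσ : σ ≠ 0) (ht : t < T) :
    deriv (fun y => deriv (fun z => call k σ r T z t) y) x =
      stdNormalPDF (d1 k σ r T x t) / (x * (σ * √(T - t))) := by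
  have hdelta : (fun y => deriv (fun z => call k σ r T z t) y) =ᶠ[nhds x]
      fun y => stdNormalCDF (d1 k σ r T y t) := by
    filter_upwards [Ioi_mem_nhds hx] with y hy using (hasDerivAt_call_spot hy hk hσ ht).deriv
  rw [hdelta.deriv_eq, (hasDerivAt_d1_spot hx.ne' hk.ne').stdNormalCDF.deriv]
  ring

lemma differentiableAt_d1_time {x t : ℝ} (hσ : σ ≠ 0) (ht : t < T) :
    DifferentiableAt ℝ (fun s => d1 k σ r T x s) t := by
  have hτ : 0 < T - t := sub_pos.mpr ht
  unfold d1
  fun_prop (disch := positivity)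

lemma hasDerivAt_call_time {x t : ℝ} (hx : 0 < x) (hk : 0 < k) (hσ : σ ≠ 0) (ht : t < T) :
    HasDerivAt (fun s => call k σ r T x s)
      (-(σ * x * stdNormalPDF (d1 k σ r T x t)) / (2 * √(T - t)) -
        r * k * exp (-r * (T - t)) * stdNormalCDF (d2 k σ r T x t)) t := by
  have hτ : T - t ≠ 0 := (sub_pos.mpr ht).ne'
  have hrem : HasDerivAt (fun s => T - s) (-1) t := (hasDerivAt_id' (x := t)).const_sub T
  have hd1 := (differentiableAt_d1_time (k := k) (r := r) (x := x) hσ ht).hasDerivAt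
  have hd2 : HasDerivAt (fun s => d2 k σ r T x s) _ t := hd1.sub ((hrem.sqrt hτ).const_mul σ)
  have h := (hd1.stdNormalCDF.const_mul x).sub
    (((hrem.const_mul (-r)).exp.const_mul k).mul hd2.stdNormalCDF)
  -- the time derivative of `d1` is never computed: its two contributions cancel
  refine h.congr_deriv ?_
  linear_combination (deriv (fun s => d1 k σ r T x s) t + σ / (2 * √(T - t))) *
    mul_stdNormalPDF_d1 (r := r) hx hk hσ ht

end BlackScholes

theorem stmt_9 (k σ r T : ℝ) (hk : 0 < k) (hσ : 0 < σ)
    (d1 d2 : ℝ → ℝ → ℝ)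
    (hd1 : ∀ x t, d1 x t = (Real.log (x / k) + (r + σ ^ 2 / 2) * (T - t)) / (σ * Real.sqrt (T - t)))
    (hd2 : ∀ x t, d2 x t = d1 x t - σ * Real.sqrt (T - t))
    (w : ℝ → ℝ → ℝ)
    (hw : ∀ x t, w x t =
      x * stdNormalCDF (d1 x t) - k * Real.exp (-r * (T - t)) * stdNormalCDF (d2 x t)) :
    ∀ x t : ℝ, 0 < x → t < T →
      deriv (fun s : ℝ => w x s) t =
        r * w x t - r * x * deriv (fun y : ℝ => w y t) x -
          (1 / 2) * σ ^ 2 * x ^ 2 * deriv (fun y : ℝ => deriv (fun z : ℝ => w z t) y) x := by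
  obtain rfl : d1 = BlackScholes.d1 k σ r T := funext₂ hd1
  obtain rfl : d2 = BlackScholes.d2 k σ r T := funext₂ hd2
  obtain rfl : w = BlackScholes.call k σ r T := funext₂ hw
  intro x t hx ht
  rw [(BlackScholes.hasDerivAt_call_time hx hk hσ.ne' ht).deriv,
    (BlackScholes.hasDerivAt_call_spot hx hk hσ.ne' ht).deriv,
    BlackScholes.deriv_deriv_call_spot hx hk hσ.ne' ht, BlackScholes.call]
  have hτ : √(T - t) ≠ 0 := Real.sqrt_ne_zero'.mpr (sub_pos.mpr ht)
  field_simp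
  ring
end

section
/- Let x > 0, k > 0, σ > 0, τ > 0, and let r be a real number. Let γ denote the standard Gaussian measure on ℝ. Then exp(-r·τ)·∫_ℝ max(x·exp((r - σ²/2)·τ + σ·√τ·z) - k, 0) dγ(z) = x·Φ(d1) - k·exp(-r·τ)·Φ(d2), where d1 = (log(x/k) + (r + σ²/2)·τ)/(σ·√τ), d2 = d1 - σ·√τ, and Φ is the standard normal cumulative distribution function. -/
/-!
The payoff `x * exp (a + b * z) - k` (with `b > 0`) is nonnegative exactly on `z ≥ c`, where `c`
is the point at which it vanishes, so the expectation splits into `x e^a E[e^{bZ}; Z ≥ c]` and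
`k P(Z ≥ c) = k Φ(-c)`. Completing the square, `e^{bz}` times the standard normal density is
`e^{b²/2}` times the `N(b, 1)` density, whence `E[e^{bZ}; Z ≥ c] = e^{b²/2} Φ(b - c)`.
For `a = (r - σ²/2)τ` and `b = σ√τ` one has `c = -d2`, `b - c = d1` and
`e^{-rτ} e^{a + b²/2} = 1`.
-/

open Real MeasureTheory ProbabilityTheory

open scoped NNReal

section Gaussian

variable {μ : ℝ} {v : ℝ≥0}

lemma setIntegral_gaussianReal_eq_setIntegral_mul (hv : v ≠ 0) {s : Set ℝ}
    (hs : MeasurableSet s) (f : ℝ → ℝ) :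
    ∫ z in s, f z ∂gaussianReal μ v = ∫ z in s, gaussianPDFReal μ v z * f z := by
  rw [gaussianReal_of_var_ne_zero μ hv, gaussianPDF_def,
    setIntegral_withDensity_eq_setIntegral_toReal_smul' s
      (measurable_gaussianPDFReal μ v).ennreal_ofReal
      (ae_of_all _ fun _ ↦ ENNReal.ofReal_lt_top)]
  refine setIntegral_congr_fun hs fun z _ ↦ ?_
  rw [ENNReal.toReal_ofReal (gaussianPDFReal_nonneg μ v z), smul_eq_mul]

lemma measureReal_gaussianReal_eq_setIntegral (hv : v ≠ 0) (s : Set ℝ) :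
    (gaussianReal μ v).real s = ∫ z in s, gaussianPDFReal μ v z := by
  rw [measureReal_def, gaussianReal_apply_eq_integral μ hv,
    ENNReal.toReal_ofReal (setIntegral_nonneg_of_ae (ae_of_all _ (gaussianPDFReal_nonneg μ v)))]

lemma exp_mul_mul_gaussianPDFReal (hv : v ≠ 0) (t z : ℝ) :
    exp (t * z) * gaussianPDFReal μ v z
      = exp (μ * t + v * t ^ 2 / 2) * gaussianPDFReal (μ + v * t) v z := by
  have hv' : (v : ℝ) ≠ 0 := NNReal.coe_ne_zero.mpr hv
  simp only [gaussianPDFReal]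
  rw [mul_left_comm, ← exp_add, mul_left_comm, ← exp_add]
  congr 2
  field_simp
  ring

lemma setIntegral_exp_mul_gaussianReal (hv : v ≠ 0) {s : Set ℝ} (hs : MeasurableSet s)
    (t : ℝ) :
    ∫ z in s, exp (t * z) ∂gaussianReal μ v
      = exp (μ * t + v * t ^ 2 / 2) * (gaussianReal (μ + v * t) v).real s := by
  rw [setIntegral_gaussianReal_eq_setIntegral_mul hv hs,
    measureReal_gaussianReal_eq_setIntegral hv, ← integral_const_mul]
  exact setIntegral_congr_fun hs fun z _ ↦ by rw [mul_comm, exp_mul_mul_gaussianPDFReal hv]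

end Gaussian

lemma stdNormalCDF_eq_measureReal (y : ℝ) :
    stdNormalCDF y = (gaussianReal 0 1).real (Set.Iic y) := by
  rw [measureReal_gaussianReal_eq_setIntegral one_ne_zero]
  simp [stdNormalCDF, gaussianPDFReal]

lemma measureReal_gaussianReal_Ici (μ c : ℝ) :
    (gaussianReal μ 1).real (Set.Ici c) = stdNormalCDF (μ - c) := by
  have hpre : (μ - ·) ⁻¹' Set.Iic (μ - c) = Set.Ici c := by ext; simp
  rw [stdNormalCDF_eq_measureReal, ← sub_self μ, ← gaussianReal_map_const_sub μ,
    map_measureReal_apply (by fun_prop) measurableSet_Iic, hpre]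

lemma max_mul_exp_sub_eq_indicator {x a b c k : ℝ} (hx : 0 < x) (hb : 0 < b)
    (hc : x * exp (a + b * c) = k) (z : ℝ) :
    max (x * exp (a + b * z) - k) 0
      = (Set.Ici c).indicator (fun z ↦ x * exp (a + b * z) - k) z := by
  by_cases hz : c ≤ z
  · have : k ≤ x * exp (a + b * z) := by
      rw [← hc]; gcongr
    simp [hz, this]
  · have : x * exp (a + b * z) ≤ k := by
      rw [← hc]; gcongr; exact (not_le.mp hz).le
    simp [hz, this]

lemma integral_max_mul_exp_sub_gaussianReal {x a b c k : ℝ} (hx : 0 < x) (hb : 0 < b)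
    (hc : x * exp (a + b * c) = k) :
    ∫ z, max (x * exp (a + b * z) - k) 0 ∂gaussianReal 0 1
      = x * exp (a + b ^ 2 / 2) * stdNormalCDF (b - c) - k * stdNormalCDF (-c) := by
  have hexp := setIntegral_exp_mul_gaussianReal (μ := 0) one_ne_zero
    (measurableSet_Ici (a := c)) b
  simp only [NNReal.coe_one, zero_mul, one_mul, zero_add, measureReal_gaussianReal_Ici] at hexp
  simp_rw [max_mul_exp_sub_eq_indicator hx hb hc, exp_add, ← mul_assoc]
  rw [integral_indicator measurableSet_Ici, integral_sub, integral_const_mul, hexp,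
    setIntegral_const, measureReal_gaussianReal_Ici]
  · simp only [zero_sub, smul_eq_mul]; ring
  · exact ((integrable_exp_mul_gaussianReal b).const_mul _).integrableOn
  · exact integrableOn_const

theorem stmt_12 (x k σ τ r : ℝ) (hx : 0 < x) (hk : 0 < k) (hσ : 0 < σ) (hτ : 0 < τ)
    (d1 d2 : ℝ)
    (hd1 : d1 = (Real.log (x / k) + (r + σ ^ 2 / 2) * τ) / (σ * Real.sqrt τ))
    (hd2 : d2 = d1 - σ * Real.sqrt τ) :
    Real.exp (-r * τ) *
        ∫ z, max (x * Real.exp ((r - σ ^ 2 / 2) * τ + σ * Real.sqrt τ * z) - k) 0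
          ∂(gaussianReal 0 1) =
      x * stdNormalCDF d1 - k * Real.exp (-r * τ) * stdNormalCDF d2 := by
  have hb : 0 < σ * √τ := by positivity
  have hb2 : (σ * √τ) ^ 2 = σ ^ 2 * τ := by rw [mul_pow, sq_sqrt hτ.le]
  have hd1b : d1 * (σ * √τ) = log (x / k) + (r + σ ^ 2 / 2) * τ := by
    rw [hd1, div_mul_cancel₀ _ hb.ne']
  have hthreshold : x * exp ((r - σ ^ 2 / 2) * τ + σ * √τ * -d2) = k := by
    have : (r - σ ^ 2 / 2) * τ + σ * √τ * -d2 = -log (x / k) := by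
      rw [hd2]; linear_combination hb2 - hd1b
    rw [this, exp_neg, exp_log (div_pos hx hk)]
    field_simp
  have hd1_eq : σ * √τ - -d2 = d1 := by rw [hd2]; ring
  have hdiscount : exp (-r * τ) * exp ((r - σ ^ 2 / 2) * τ + (σ * √τ) ^ 2 / 2) = 1 := by
    rw [← exp_add, hb2, ← exp_zero]; ring_nf
  rw [integral_max_mul_exp_sub_gaussianReal hx hb hthreshold, hd1_eq, neg_neg]
  linear_combination (x * stdNormalCDF d1) * hdiscount
end
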